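/- For every integer k ≥ 2, every hypertree k-metric is a coboundary k-metric with respect to the ℓ_1 norm: if (X, d) is the hypertree k-metric associated with a (k−1)-hypertree T on X with nonnegative weights w, then there exists an integer m ≥ 1 such that (X, d) ∈ C_{k,1}^m. -/

import Mathlib

/-!
Since `T` is a hypertree, `∂` is a linear isomorphism from the alternating chains supported on
`T` onto the alternating cycles, so the filling `β ↦ α_β` of a cycle is linear; extend it to a
linear map `F` on all chains. For every `(k+2)`-tuple `s` put `c_s = w(s) / (k+2)!` and
`f_s(y) = c_s · F(1_y)(s)`. Because `f_s` is linear in `1_y` and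
`∂1_x = ∑ᵢ (-1)ⁱ 1_{x∘succAbove i}`, `δf_s(x) = c_s · α_{∂1_x}(s)`. Summing `|δf_s(x)|` over
all tuples `s` gives exactly the hypertree metric `d(x)`, the weights being nonnegative on `T`.
-/

open scoped BigOperators

/-- An alternating real-valued function on `j`-tuples of `X`
(a `(j-1)`-dimensional chain on the complete complex on `X`). -/
def AltChain {X : Type*} {j : ℕ} (α : (Fin j → X) → ℝ) : Prop :=
  ∀ (π : Equiv.Perm (Fin j)) (x : Fin j → X),
    α (x ∘ π) = ((Equiv.Perm.sign π : ℤ) : ℝ) * α x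

/-- The boundary operator: `(∂α)(y₁,…,y_j) = ∑_{x ∈ X} α(x, y₁, …, y_j)`. -/
noncomputable def bdry {X : Type*} [Fintype X] {j : ℕ}
    (α : (Fin (j + 1) → X) → ℝ) : (Fin j → X) → ℝ :=
  fun y => ∑ x : X, α (Fin.cons x y)

/-- The elementary chain `1_t`: value `sign π` on the reordering of `t` by `π`,
and `0` on all other tuples. -/
noncomputable def unitChain {X : Type*} [DecidableEq X] {j : ℕ} (t : Fin j → X) :
    (Fin j → X) → ℝ :=
  fun s => ∑ π : Equiv.Perm (Fin j),
    if s = t ∘ π then ((Equiv.Perm.sign π : ℤ) : ℝ) else 0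

/-- The coboundary operator:
`(δf)(x₁,…,x_{j+2}) = ∑ᵢ (-1)^(i+1) f(x₁,…,x̂ᵢ,…,x_{j+2})` (`0`-indexed sign `(-1)^i`). -/
noncomputable def cobdry {X : Type*} {j : ℕ}
    (f : (Fin (j + 1) → X) → ℝ) : (Fin (j + 2) → X) → ℝ :=
  fun x => ∑ i : Fin (j + 2), (-1 : ℝ) ^ (i : ℕ) * f (x ∘ i.succAbove)

/-- A pseudo metric of arity `K` (a pseudo `K`-metric): nonnegative, vanishing on
non-injective tuples, permutation invariant, satisfying the simplex inequality. -/
structure IsPseudoMetric {X : Type*} (K : ℕ) (d : (Fin K → X) → ℝ) : Prop where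
  nonneg : ∀ x, 0 ≤ d x
  eq_zero : ∀ x, ¬ Function.Injective x → d x = 0
  perm : ∀ (π : Equiv.Perm (Fin K)) (x), d (x ∘ π) = d x
  simplex : ∀ (x : Fin K → X) (y : X),
    d x ≤ ∑ i : Fin K, d (Function.update x i y)

/-- A strong pseudo metric of arity `k + 1` (a strong pseudo `(k+1)`-metric).
The strong simplex inequality `d t ≤ ∑_τ |α(τ)| * d(τ)` (with the sum over
`(k+1)`-element subsets `τ` of `X`, each evaluated on any fixed ordering of `τ`)
is stated in the equivalent form `(k+1)! * d t ≤ ∑_s |α(s)| * d(s)` with the sum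
over all `(k+1)`-tuples `s`: since `α` is alternating and `d` is permutation
invariant, the summand depends only on the underlying set of `s` (it vanishes on
tuples with repeated entries), and each `(k+1)`-element subset has exactly
`(k+1)!` orderings. -/
structure IsStrongPseudoMetric {X : Type*} [Fintype X] [DecidableEq X] (k : ℕ)
    (d : (Fin (k + 1) → X) → ℝ) : Prop where
  nonneg : ∀ x, 0 ≤ d x
  eq_zero : ∀ x, ¬ Function.Injective x → d x = 0
  perm : ∀ (π : Equiv.Perm (Fin (k + 1))) (x), d (x ∘ π) = d x
  strong_simplex : ∀ t : Fin (k + 1) → X, Function.Injective t →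
    ∀ α : (Fin (k + 1) → X) → ℝ, AltChain α → bdry α = bdry (unitChain t) →
      ((k + 1).factorial : ℝ) * d t ≤ ∑ s : Fin (k + 1) → X, |α s| * d s

/-- `(X, d)` is a coboundary metric of arity `k + 2` in `m` dimensions with respect
to the norm `ν` on `ℝ^m`: there are chains `f 1, …, f m` on `(k+1)`-tuples (i.e.
`(k+2)-2`-dimensional chains for arity `k+2`) whose simultaneous coboundary
realizes `d` on injective tuples, and `d` vanishes on non-injective tuples. -/
def IsCoboundaryMetric {X : Type*} (k m : ℕ) (ν : (Fin m → ℝ) → ℝ)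
    (d : (Fin (k + 2) → X) → ℝ) : Prop :=
  ∃ f : Fin m → ((Fin (k + 1) → X) → ℝ),
    (∀ i, AltChain (f i)) ∧
    (∀ x, Function.Injective x → d x = ν (fun i => cobdry (f i) x)) ∧
    (∀ x, ¬ Function.Injective x → d x = 0)

/-- `ν` is a norm on `ℝ^m`. -/
structure IsNorm {m : ℕ} (ν : (Fin m → ℝ) → ℝ) : Prop where
  nonneg : ∀ x, 0 ≤ ν x
  eq_zero_iff : ∀ x, ν x = 0 ↔ x = 0
  homog : ∀ (c : ℝ) (x), ν (c • x) = |c| * ν x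
  triangle : ∀ x y, ν (x + y) ≤ ν x + ν y

/-- The `ℓ_p` norm on `ℝ^m` for real `p`. -/
noncomputable def lpNorm (p : ℝ) {m : ℕ} (x : Fin m → ℝ) : ℝ :=
  (∑ i, |x i| ^ p) ^ (1 / p)

/-- The `ℓ_1` norm on `ℝ^m`. -/
noncomputable def l1Norm {m : ℕ} (x : Fin m → ℝ) : ℝ := ∑ i, |x i|

/-- The `ℓ_2` (Euclidean) norm on `ℝ^m`. -/
noncomputable def l2Norm {m : ℕ} (x : Fin m → ℝ) : ℝ := Real.sqrt (∑ i, x i ^ 2)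

/-- The `ℓ_∞` norm on `ℝ^m` (the sup norm, which is the norm of `Fin m → ℝ`). -/
noncomputable def linfNorm {m : ℕ} (x : Fin m → ℝ) : ℝ := ‖x‖

/- The apex extension of `d` (of arity `K`), with the apex being
`none : Option X` (a new element not in `X`): on an injective `(K+1)`-tuple
containing the apex in position `i` it is `d` of the tuple with position `i`
removed, and it is `0` on all other tuples. -/
open Classical in
noncomputable def apexExt {X : Type*} {K : ℕ} (d : (Fin K → X) → ℝ) :
    (Fin (K + 1) → Option X) → ℝ := fun x =>
  if h : Function.Injective x ∧ ∃ i, x i = none then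
    d (fun j =>
      Option.get (x ((Classical.choose h.2).succAbove j))
        (by
          rw [Option.isSome_iff_ne_none]
          intro hnone
          exact Fin.succAbove_ne (Classical.choose h.2) j
            (h.1 (hnone.trans (Classical.choose_spec h.2).symm))))
  else 0

/-- The `K`-dimensional volume of the simplex with vertices `y 0, …, y K` in `ℝ^m`:
`(1/K!) * √(det (AᵀA))` where `A` is the `m × K` matrix with columns
`y i - y 0`, `i = 1, …, K`. -/
noncomputable def simplexVolume {m K : ℕ} (y : Fin (K + 1) → (Fin m → ℝ)) : ℝ :=
  (1 / (K.factorial : ℝ)) *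
    Real.sqrt
      (Matrix.det
        (Matrix.of fun i j : Fin K =>
          ∑ l : Fin m, (y i.succ l - y 0 l) * (y j.succ l - y 0 l)))

/-- A chain on `K`-tuples is supported on a collection `T` of subsets of `X` if it
vanishes on every tuple whose underlying set is not in `T`. -/
def SupportedOn {X : Type*} [DecidableEq X] {K : ℕ} (T : Finset (Finset X))
    (α : (Fin K → X) → ℝ) : Prop :=
  ∀ s : Fin K → X, Finset.image s Finset.univ ∉ T → α s = 0

/-- `T` is a `(k+1)`-hypertree on `X` (for arity `k + 2`): a collection of
`(k+2)`-element subsets such that the only supported chain with zero boundary is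
zero, and every chain on `(k+1)`-tuples with zero boundary is the boundary of a
supported chain. -/
def IsHypertree {X : Type*} [Fintype X] [DecidableEq X] (k : ℕ)
    (T : Finset (Finset X)) : Prop :=
  (∀ τ ∈ T, τ.card = k + 2) ∧
  (∀ α : (Fin (k + 2) → X) → ℝ, AltChain α → SupportedOn T α →
      bdry α = 0 → α = 0) ∧
  (∀ β : (Fin (k + 1) → X) → ℝ, AltChain β → bdry β = 0 →
      ∃ α : (Fin (k + 2) → X) → ℝ, AltChain α ∧ SupportedOn T α ∧ bdry α = β)

/-- `d` is the hypertree metric of `(T, w)`: it vanishes on non-injective tuples,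
and for an injective tuple `x`, if `α` is the (unique) chain supported on `T` with
`∂α = ∂1ₓ`, then `d x = ∑_{τ ∈ T} |α(τ)| * w(τ)`; as before, the sum over subsets
is stated in the equivalent form `(k+2)! * d x = ∑_s |α(s)| * w(set of s)` with
the sum over all `(k+2)`-tuples `s` (the summand depends only on the underlying
set of `s`, and each `(k+2)`-set has `(k+2)!` orderings). -/
def IsHypertreeMetric {X : Type*} [Fintype X] [DecidableEq X] (k : ℕ)
    (T : Finset (Finset X)) (w : Finset X → ℝ) (d : (Fin (k + 2) → X) → ℝ) :
    Prop :=
  (∀ x : Fin (k + 2) → X, ¬ Function.Injective x → d x = 0) ∧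
  (∀ x : Fin (k + 2) → X, Function.Injective x →
    ∀ α : (Fin (k + 2) → X) → ℝ, AltChain α → SupportedOn T α →
      bdry α = bdry (unitChain x) →
        ((k + 2).factorial : ℝ) * d x =
          ∑ s : Fin (k + 2) → X, |α s| * w (Finset.image s Finset.univ))

open Finset

namespace HypertreeMetric

variable {X : Type*}

variable (X) in
def altChains (j : ℕ) : Submodule ℝ ((Fin j → X) → ℝ) where
  carrier := {α | AltChain α}
  add_mem' {a b} ha hb π x := by simp only [Pi.add_apply, ha π x, hb π x, mul_add]
  zero_mem' π x := by simp
  smul_mem' c a ha π x := by simp only [Pi.smul_apply, smul_eq_mul, ha π x]; ring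

def supportedChains [DecidableEq X] (T : Finset (Finset X)) (j : ℕ) :
    Submodule ℝ ((Fin j → X) → ℝ) where
  carrier := {α | SupportedOn T α}
  add_mem' {a b} ha hb s hs := by simp [ha s hs, hb s hs]
  zero_mem' s _ := rfl
  smul_mem' c a ha s hs := by simp [ha s hs]

variable (X) in
noncomputable def bdryLinearMap [Fintype X] (j : ℕ) :
    ((Fin (j + 1) → X) → ℝ) →ₗ[ℝ] (Fin j → X) → ℝ where
  toFun := bdry
  map_add' a b := by ext y; simp [bdry, sum_add_distrib]
  map_smul' c a := by ext y; simp [bdry, mul_sum]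

section Boundary

variable [Fintype X]

lemma altChain_bdry {j : ℕ} {α : (Fin (j + 1) → X) → ℝ} (hα : AltChain α) :
    AltChain (bdry α) := by
  intro π y
  have hcons : ∀ z : X, (Fin.cons z (y ∘ π) : Fin (j + 1) → X) =
      Fin.cons z y ∘ Equiv.Perm.decomposeFin.symm (0, π) := by
    intro z; ext m
    refine Fin.cases ?_ (fun l => ?_) m
    · simp [Equiv.Perm.decomposeFin_symm_apply_zero]
    · simp [Equiv.Perm.decomposeFin_symm_apply_succ]
  simp only [bdry, mul_sum]
  refine sum_congr rfl fun z _ => ?_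
  rw [hcons, hα]
  simp [Equiv.Perm.decomposeFin.symm_sign]

lemma bdry_bdry {j : ℕ} {α : (Fin (j + 2) → X) → ℝ} (hα : AltChain α) :
    bdry (bdry α) = 0 := by
  ext y
  have hswap : ∀ z z' : X,
      α (Fin.cons z' (Fin.cons z y)) = - α (Fin.cons z (Fin.cons z' y)) := by
    intro z z'
    have hcomp : (Fin.cons z (Fin.cons z' y) : Fin (j + 2) → X) ∘ Equiv.swap 0 1 =
        Fin.cons z' (Fin.cons z y) := by
      ext m
      refine Fin.cases ?_ (fun l => Fin.cases ?_ (fun l => ?_) l) m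
      · simp
      · simp
      · rw [Function.comp_apply,
          Equiv.swap_apply_of_ne_of_ne (Fin.succ_ne_zero _) (by simp [Fin.ext_iff])]
        simp
    rw [← hcomp, hα, Equiv.Perm.sign_swap (by simp)]
    simp
  have h : bdry (bdry α) y = - bdry (bdry α) y := by
    calc bdry (bdry α) y = ∑ z : X, ∑ z' : X, - α (Fin.cons z (Fin.cons z' y)) := by
          simp only [bdry]
          exact sum_congr rfl fun z _ => sum_congr rfl fun z' _ => hswap z z'
      _ = - bdry (bdry α) y := by
          rw [sum_comm]; simp [bdry, sum_neg_distrib]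
  simp only [Pi.zero_apply]
  linarith

end Boundary

section SuccAboveDecomposition

open Equiv

def succAbovePerm {n : ℕ} (i : Fin (n + 1)) (σ : Perm (Fin n)) : Perm (Fin (n + 1)) :=
  i.cycleRange.symm * Perm.decomposeFin.symm (0, σ)

@[simp] lemma succAbovePerm_zero {n : ℕ} (i : Fin (n + 1)) (σ : Perm (Fin n)) :
    succAbovePerm i σ 0 = i := by
  simp [succAbovePerm, Perm.decomposeFin_symm_apply_zero, Fin.cycleRange_symm_zero]

@[simp] lemma succAbovePerm_succ {n : ℕ} (i : Fin (n + 1)) (σ : Perm (Fin n)) (j : Fin n) :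
    succAbovePerm i σ j.succ = i.succAbove (σ j) := by
  simp [succAbovePerm, Perm.decomposeFin_symm_apply_succ, Fin.cycleRange_symm_succ]

lemma sign_succAbovePerm {n : ℕ} (i : Fin (n + 1)) (σ : Perm (Fin n)) :
    Perm.sign (succAbovePerm i σ) = (-1) ^ (i : ℕ) * Perm.sign σ := by
  simp [succAbovePerm, Perm.decomposeFin.symm_sign, Fin.sign_cycleRange]

lemma bijective_succAbovePerm (n : ℕ) :
    Function.Bijective fun p : Fin (n + 1) × Perm (Fin n) => succAbovePerm p.1 p.2 := by
  refine (Fintype.bijective_iff_injective_and_card _).2 ⟨?_, ?_⟩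
  · rintro ⟨i, σ⟩ ⟨i', σ'⟩ h
    have hi : i = i' := by simpa using DFunLike.congr_fun h 0
    subst hi
    refine Prod.ext rfl (Equiv.ext fun j => Fin.succAbove_right_injective (p := i) ?_)
    simpa using DFunLike.congr_fun h j.succ
  · simp [Fintype.card_perm, Nat.factorial_succ]

end SuccAboveDecomposition

section UnitChain

variable [DecidableEq X]

lemma altChain_unitChain {j : ℕ} (t : Fin j → X) : AltChain (unitChain t) := by
  intro π s
  simp only [unitChain, mul_sum]
  rw [← Equiv.sum_comp (Equiv.mulRight π)]
  refine sum_congr rfl fun σ _ => ?_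
  simp only [Equiv.coe_mulRight, Equiv.Perm.coe_mul, ← Function.comp_assoc,
    π.surjective.injective_comp_right.eq_iff, Equiv.Perm.sign_mul, Units.val_mul, Int.cast_mul]
  split_ifs <;> ring

lemma unitChain_comp_perm {j : ℕ} (t : Fin j → X) (π : Equiv.Perm (Fin j)) :
    unitChain (t ∘ π) = ((Equiv.Perm.sign π : ℤ) : ℝ) • unitChain t := by
  ext s
  simp only [unitChain, Pi.smul_apply, smul_eq_mul, mul_sum]
  rw [← Equiv.sum_comp (Equiv.mulLeft π⁻¹)]
  refine sum_congr rfl fun σ _ => ?_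
  have hcomp : (t ∘ π) ∘ ⇑(π⁻¹ * σ) = t ∘ σ := by ext; simp
  simp only [Equiv.coe_mulLeft, hcomp, Equiv.Perm.sign_mul, Equiv.Perm.sign_inv, Units.val_mul,
    Int.cast_mul]
  split_ifs <;> ring

lemma bdry_unitChain [Fintype X] {n : ℕ} (x : Fin (n + 1) → X) :
    bdry (unitChain x) =
      ∑ i : Fin (n + 1), ((-1 : ℝ) ^ (i : ℕ)) • unitChain (x ∘ i.succAbove) := by
  ext y
  have hcons : ∀ (z : X) (π : Equiv.Perm (Fin (n + 1))),
      (Fin.cons z y = x ∘ π) ↔ (z = x (π 0) ∧ y = x ∘ π ∘ Fin.succ) := by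
    intro z π
    rw [← Fin.cons_self_tail (x ∘ π), Fin.cons_inj]
    rfl
  have hface : ∀ (i : Fin (n + 1)) (σ : Equiv.Perm (Fin n)),
      x ∘ succAbovePerm i σ ∘ Fin.succ = (x ∘ i.succAbove) ∘ σ := by
    intro i σ; ext; simp
  calc bdry (unitChain x) y
      = ∑ π : Equiv.Perm (Fin (n + 1)),
          if y = x ∘ π ∘ Fin.succ then ((Equiv.Perm.sign π : ℤ) : ℝ) else 0 := by
        simp only [bdry, unitChain]
        rw [sum_comm]
        refine sum_congr rfl fun π _ => ?_
        simp only [hcons, ite_and, sum_ite_eq', mem_univ, if_true]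
    _ = ∑ p : Fin (n + 1) × Equiv.Perm (Fin n),
          if y = x ∘ succAbovePerm p.1 p.2 ∘ Fin.succ then
            ((Equiv.Perm.sign (succAbovePerm p.1 p.2) : ℤ) : ℝ) else 0 :=
        ((bijective_succAbovePerm n).sum_comp
          (fun π => if y = x ∘ π ∘ Fin.succ then ((Equiv.Perm.sign π : ℤ) : ℝ) else 0)).symm
    _ = _ := by
        simp only [Fintype.sum_prod_type, hface, sign_succAbovePerm, Finset.sum_apply,
          Pi.smul_apply, smul_eq_mul, unitChain, mul_sum]
        refine sum_congr rfl fun i _ => sum_congr rfl fun σ _ => ?_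
        split_ifs <;> simp

end UnitChain

section Duality

variable [DecidableEq X]

lemma altChain_linearMap_unitChain {j : ℕ} (G : ((Fin j → X) → ℝ) →ₗ[ℝ] ℝ) :
    AltChain fun y => G (unitChain y) := by
  intro π y
  simp only [unitChain_comp_perm, map_smul, smul_eq_mul]

lemma cobdry_linearMap_unitChain [Fintype X] {j : ℕ} (G : ((Fin (j + 1) → X) → ℝ) →ₗ[ℝ] ℝ)
    (x : Fin (j + 2) → X) :
    cobdry (fun y => G (unitChain y)) x = G (bdry (unitChain x)) := by
  simp only [cobdry, bdry_unitChain, map_sum, map_smul, smul_eq_mul]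

end Duality

lemma IsHypertree.exists_linearMap_filling [Fintype X] [DecidableEq X] {k : ℕ}
    {T : Finset (Finset X)} (hT : IsHypertree k T) :
    ∃ F : ((Fin (k + 1) → X) → ℝ) →ₗ[ℝ] (Fin (k + 2) → X) → ℝ, ∀ β, AltChain β → bdry β = 0 →
      AltChain (F β) ∧ SupportedOn T (F β) ∧ bdry (F β) = β := by
  obtain ⟨-, hinj, hsurj⟩ := hT
  let S := altChains X (k + 2) ⊓ supportedChains T (k + 2)
  let Z := altChains X (k + 1) ⊓ LinearMap.ker (bdryLinearMap X k)
  let D : S →ₗ[ℝ] Z := (bdryLinearMap X (k + 1)).restrict fun α hα =>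
    ⟨altChain_bdry hα.1, bdry_bdry hα.1⟩
  have hD : Function.Bijective D := by
    refine ⟨(injective_iff_map_eq_zero D).2 fun α hα => ?_, fun β => ?_⟩
    · exact Subtype.ext (hinj α α.2.1 α.2.2 (congrArg Subtype.val hα))
    · obtain ⟨α, hα, hαT, hαβ⟩ := hsurj β β.2.1 β.2.2
      exact ⟨⟨α, hα, hαT⟩, Subtype.ext hαβ⟩
  let E := LinearEquiv.ofBijective D hD
  obtain ⟨F, hF⟩ := LinearMap.exists_extend (S.subtype ∘ₗ E.symm.toLinearMap)
  refine ⟨F, fun β hβ hβ0 => ?_⟩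
  have hFβ : F β = E.symm ⟨β, hβ, hβ0⟩ := LinearMap.congr_fun hF ⟨β, hβ, hβ0⟩
  rw [hFβ]
  exact ⟨(E.symm _).2.1, (E.symm _).2.2, congrArg Subtype.val (E.apply_symm_apply _)⟩

lemma exists_isCoboundaryMetric_l1Norm {ι : Type*} [Fintype ι] {k : ℕ}
    {d : (Fin (k + 2) → X) → ℝ} (f : ι → (Fin (k + 1) → X) → ℝ) (hf : ∀ i, AltChain (f i))
    (hd : ∀ x, Function.Injective x → d x = ∑ i, |cobdry (f i) x|)
    (hd0 : ∀ x, ¬ Function.Injective x → d x = 0) :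
    ∃ m, 1 ≤ m ∧ IsCoboundaryMetric k m l1Norm d := by
  let e := Fintype.equivFin (Option ι)
  refine ⟨Fintype.card (Option ι), by simp, fun j => (e.symm j).elim 0 f, fun j => ?_,
    fun x hx => ?_, hd0⟩
  · show AltChain ((e.symm j).elim 0 f)
    cases e.symm j with
    | none => exact (altChains X (k + 1)).zero_mem
    | some i => exact hf i
  · rw [hd x hx, l1Norm, e.symm.sum_comp (fun o => |cobdry (o.elim 0 f) x|), Fintype.sum_option]
    simp [cobdry]

lemma IsHypertreeMetric.apply_eq_sum_abs [Fintype X] [DecidableEq X] {k : ℕ}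
    {T : Finset (Finset X)} {w : Finset X → ℝ} {d : (Fin (k + 2) → X) → ℝ}
    (hd : IsHypertreeMetric k T w d) (hw : ∀ τ ∈ T, 0 ≤ w τ) {x : Fin (k + 2) → X}
    (hx : Function.Injective x) {α : (Fin (k + 2) → X) → ℝ} (hα : AltChain α)
    (hαT : SupportedOn T α) (hαx : bdry α = bdry (unitChain x)) :
    d x = ∑ s, |w (image s univ) / (k + 2).factorial * α s| := by
  have hterm : ∀ s : Fin (k + 2) → X,
      |w (image s univ) / (k + 2).factorial * α s| =
        |α s| * w (image s univ) / (k + 2).factorial := by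
    intro s
    by_cases hs : image s univ ∈ T
    · rw [abs_mul, abs_of_nonneg (div_nonneg (hw _ hs) (Nat.cast_nonneg _))]
      ring
    · simp [hαT s hs]
  rw [sum_congr rfl fun s _ => hterm s, ← sum_div, ← hd.2 x hx α hα hαT hαx]
  field_simp

end HypertreeMetric

open HypertreeMetric

/-- every hypertree metric (of arity `k + 2`) is a coboundary
metric with respect to the `ℓ_1` norm, in some dimension `m ≥ 1`. -/
theorem stmt_13 (k : ℕ) {X : Type*} [Fintype X] [DecidableEq X]
    (T : Finset (Finset X)) (hT : IsHypertree k T)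
    (w : Finset X → ℝ) (hw : ∀ τ ∈ T, 0 ≤ w τ)
    (d : (Fin (k + 2) → X) → ℝ) (hd : IsHypertreeMetric k T w d) :
    ∃ m : ℕ, 1 ≤ m ∧ IsCoboundaryMetric k m l1Norm d := by
  obtain ⟨F, hF⟩ := hT.exists_linearMap_filling
  let G : (Fin (k + 2) → X) → ((Fin (k + 1) → X) → ℝ) →ₗ[ℝ] ℝ := fun s =>
    (w (image s univ) / (k + 2).factorial) • (LinearMap.proj s ∘ₗ F)
  refine exists_isCoboundaryMetric_l1Norm (fun s y => G s (unitChain y))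
    (fun s => altChain_linearMap_unitChain (G s)) (fun x hx => ?_) hd.1
  have h1x := altChain_unitChain x
  obtain ⟨hα, hαT, hαx⟩ := hF _ (altChain_bdry h1x) (bdry_bdry h1x)
  simp only [cobdry_linearMap_unitChain]
  exact hd.apply_eq_sum_abs hw hx hα hαT hαx
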